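/- (Orthoplex bound, complex case) Let φ_1, ..., φ_N be unit vectors in ℂ^M with N > M^2. Then the coherence satisfies max_{j ≠ l} |⟨φ_j, φ_l⟩| ≥ 1/√M. Consequently, the Grassmannian constant μ_{N,M}(ℂ), the infimum of the coherence over all sets of N unit vectors in ℂ^M, is at least 1/√M when N > M^2. -/

import Mathlib

/-!
A Hermitian `M × M` matrix is a vector of a real space of dimension `M²`, with inner product
`Re tr (A* B)`, and for unit vectors `⟪φφ*, ψψ*⟫ = |⟪φ, ψ⟫|²`. The traceless parts
`T_j = φ_j φ_j* - I / M` lie in the hyperplane orthogonal to `I` and satisfy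
`⟪T_j, T_l⟫ = |⟪φ_j, φ_l⟫|² - 1 / M`. If the coherence were below `1 / √M`, they would be
`N > M²` pairwise obtuse vectors in dimension `M² - 1`; but pairwise obtuse vectors in
dimension `d` number at most `d + 1`.
-/

/-- The coherence of a family of `N` vectors in `ℂ^M`: the supremum of
`|⟨φ_j, φ_l⟩|` over all pairs `j ≠ l`. -/
noncomputable def coherence {M N : ℕ} (φ : Fin N → EuclideanSpace ℂ (Fin M)) : ℝ :=
  ⨆ p : {p : Fin N × Fin N // p.1 ≠ p.2}, ‖(inner ℂ (φ (p : Fin N × Fin N).1) (φ (p : Fin N × Fin N).2) : ℂ)‖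

/-- The Grassmannian constant `μ_{N,M}(ℂ)`: the infimum of the coherence over all
families of `N` unit vectors in `ℂ^M`. -/
noncomputable def grassmannianConst (N M : ℕ) : ℝ :=
  ⨅ φ : {φ : Fin N → EuclideanSpace ℂ (Fin M) // ∀ j, ‖φ j‖ = 1},
    coherence (φ : Fin N → EuclideanSpace ℂ (Fin M))

open scoped InnerProductSpace ComplexConjugate
open Finset Matrix Module

section ObtuseFamily

variable {V : Type*} [NormedAddCommGroup V] [InnerProductSpace ℝ V] {ι : Type*} [Fintype ι]
  {v : ι → V}

lemma inner_sum_smul_sum_smul_nonpos (hv : Pairwise fun i j => ⟪v i, v j⟫_ℝ < 0)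
    {a b : ι → ℝ} (ha : 0 ≤ a) (hb : 0 ≤ b) (hab : ∀ i, a i * b i = 0) :
    ⟪∑ i, a i • v i, ∑ j, b j • v j⟫_ℝ ≤ 0 := by
  rw [sum_inner]
  refine sum_nonpos fun i _ => ?_
  rw [inner_sum]
  refine sum_nonpos fun j _ => ?_
  rw [real_inner_smul_left, real_inner_smul_right]
  rcases eq_or_ne i j with rfl | hij
  · rw [← mul_assoc, hab i, zero_mul]
  · exact mul_nonpos_of_nonneg_of_nonpos (ha i)
      (mul_nonpos_of_nonneg_of_nonpos (hb j) (hv hij).le)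

lemma eq_zero_of_sum_smul_eq_zero_of_inner_neg {u : V} (hu : ∀ i, ⟪u, v i⟫_ℝ < 0)
    {d : ι → ℝ} (hd : 0 ≤ d) (hsum : ∑ i, d i • v i = 0) : d = 0 := by
  have hterms : ∑ i, d i * ⟪u, v i⟫_ℝ = 0 := by
    simpa [inner_sum, real_inner_smul_right] using congrArg (⟪u, ·⟫_ℝ) hsum
  funext i
  have := (sum_eq_zero_iff_of_nonpos fun j _ =>
    mul_nonpos_of_nonneg_of_nonpos (hd j) (hu j).le).1 hterms i (mem_univ i)
  exact (mul_eq_zero.1 this).resolve_right (hu i).ne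

lemma linearIndependent_of_pairwise_inner_neg (hv : Pairwise fun i j => ⟪v i, v j⟫_ℝ < 0)
    {u : V} (hu : ∀ i, ⟪u, v i⟫_ℝ < 0) : LinearIndependent ℝ v := by
  rw [Fintype.linearIndependent_iff]
  intro c hc
  -- `w = ∑ c⁺ • v = ∑ c⁻ • v` has `‖w‖² = ⟪∑ c⁺ • v, ∑ c⁻ • v⟫ ≤ 0`, and `⟪u, w⟫ < 0` unless `c = 0`.
  have hsplit : ∑ i, c⁺ i • v i = ∑ i, c⁻ i • v i := by
    rw [← sub_eq_zero, ← sum_sub_distrib]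
    simpa [← sub_smul] using hc
  have hzero : ∑ i, c⁺ i • v i = 0 := by
    rw [← real_inner_self_nonpos]
    nth_rewrite 2 [hsplit]
    refine inner_sum_smul_sum_smul_nonpos hv (posPart_nonneg c) (negPart_nonneg c) fun i => ?_
    rcases le_total (c i) 0 with h | h <;> simp [h]
  have hpos := eq_zero_of_sum_smul_eq_zero_of_inner_neg hu (posPart_nonneg c) hzero
  have hneg := eq_zero_of_sum_smul_eq_zero_of_inner_neg hu (negPart_nonneg c) (hsplit ▸ hzero)
  intro i
  rw [← posPart_sub_negPart c, hpos, hneg, sub_zero, Pi.zero_apply]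

lemma card_le_finrank_add_one_of_pairwise_inner_neg [FiniteDimensional ℝ V]
    (hv : Pairwise fun i j => ⟪v i, v j⟫_ℝ < 0) : Fintype.card ι ≤ finrank ℝ V + 1 := by
  classical
  rcases isEmpty_or_nonempty ι with _ | ⟨⟨i₀⟩⟩
  · simp
  have hindep : LinearIndependent ℝ fun i : {i // i ≠ i₀} => v i :=
    linearIndependent_of_pairwise_inner_neg (fun i j hij => hv (Subtype.coe_ne_coe.2 hij))
      (u := v i₀) fun i => hv (Ne.symm i.2)
  have hcard := hindep.fintype_card_le_finrank
  simp only [Fintype.card_subtype_compl, Fintype.card_unique] at hcard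
  omega

lemma card_le_finrank_of_pairwise_inner_neg [FiniteDimensional ℝ V]
    (hv : Pairwise fun i j => ⟪v i, v j⟫_ℝ < 0) {u : V} (hu₀ : u ≠ 0)
    (hu : ∀ i, ⟪u, v i⟫_ℝ = 0) : Fintype.card ι ≤ finrank ℝ V := by
  set K := (ℝ ∙ u)ᗮ
  let w : ι → K := fun i => ⟨v i, Submodule.mem_orthogonal_singleton_iff_inner_right.2 (hu i)⟩
  have hcard : Fintype.card ι ≤ finrank ℝ K + 1 :=
    card_le_finrank_add_one_of_pairwise_inner_neg (v := w) fun i j hij => by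
      simpa [w, Submodule.coe_inner] using hv hij
  have hdim := (ℝ ∙ u).finrank_add_finrank_orthogonal
  rw [finrank_span_singleton hu₀, add_comm] at hdim
  exact hcard.trans_eq hdim

end ObtuseFamily

lemma isHermitian_vecMulVec_star {n α : Type*} [Mul α] [StarMul α] (x : n → α) :
    (vecMulVec x (star x)).IsHermitian := by
  rw [IsHermitian, conjTranspose_vecMulVec, star_star]

section FlattenReIm

variable {n : Type*} [Fintype n]

/-- On Hermitian matrices the cross terms `Re A_ij Im B_ij + Im A_ij Re B_ij` cancel between
`(i, j)` and `(j, i)`, so this is an isometry for `Re tr (A* B)` into only `n²` real coordinates. -/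
noncomputable def flattenReIm (A : Matrix n n ℂ) : EuclideanSpace ℝ (n × n) :=
  WithLp.toLp 2 fun p => (A p.1 p.2).re + (A p.1 p.2).im

lemma inner_flattenReIm {A B : Matrix n n ℂ} (hA : A.IsHermitian) (hB : B.IsHermitian) :
    ⟪flattenReIm A, flattenReIm B⟫_ℝ = (∑ i, ∑ j, conj (A i j) * B i j).re := by
  set cross : n → n → ℝ := fun i j => (A i j).re * (B i j).im + (A i j).im * (B i j).re
  have hcross : ∑ i, ∑ j, cross i j = 0 := by
    have hswap : ∀ i j, cross j i = -cross i j := by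
      intro i j
      simp only [cross]
      rw [← hA.apply j i, ← hB.apply j i]
      simp only [RCLike.star_def, Complex.conj_re, Complex.conj_im]
      ring
    have hneg : ∑ i, ∑ j, cross i j = ∑ i, ∑ j, -cross i j := by
      rw [sum_comm]
      exact sum_congr rfl fun i _ => sum_congr rfl fun j _ => hswap i j
    simp only [sum_neg_distrib] at hneg
    linarith
  have hexpand : ⟪flattenReIm A, flattenReIm B⟫_ℝ
      = ∑ i, ∑ j, ((conj (A i j) * B i j).re + cross i j) := by
    simp only [flattenReIm, PiLp.inner_apply, Fintype.sum_prod_type, RCLike.inner_apply,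
      conj_trivial, Complex.mul_re, Complex.conj_re, Complex.conj_im, cross]
    exact sum_congr rfl fun i _ => sum_congr rfl fun j _ => by ring
  rw [hexpand, Complex.re_sum]
  simp only [sum_add_distrib, hcross, add_zero, Complex.re_sum]

lemma inner_flattenReIm_vecMulVec (x y : EuclideanSpace ℂ n) :
    ⟪flattenReIm (vecMulVec x (star x)), flattenReIm (vecMulVec y (star y))⟫_ℝ
      = ‖⟪x, y⟫_ℂ‖ ^ 2 := by
  rw [inner_flattenReIm (isHermitian_vecMulVec_star _) (isHermitian_vecMulVec_star _)]
  have hfactor : ∑ i, ∑ j, conj (vecMulVec x (star x) i j) * vecMulVec y (star y) i j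
      = ⟪x, y⟫_ℂ * conj ⟪x, y⟫_ℂ := by
    simp only [vecMulVec_apply, PiLp.inner_apply, RCLike.inner_apply, map_sum, map_mul,
      Pi.star_apply, RCLike.star_def, Complex.conj_conj, sum_mul_sum]
    exact sum_congr rfl fun i _ => sum_congr rfl fun j _ => by ring
  rw [hfactor, Complex.mul_conj, Complex.ofReal_re, Complex.normSq_eq_norm_sq]

variable [DecidableEq n]

lemma inner_flattenReIm_one_vecMulVec (x : EuclideanSpace ℂ n) :
    ⟪flattenReIm 1, flattenReIm (vecMulVec x (star x))⟫_ℝ = ‖x‖ ^ 2 := by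
  rw [inner_flattenReIm isHermitian_one (isHermitian_vecMulVec_star _),
    EuclideanSpace.norm_sq_eq]
  simp [one_apply, vecMulVec_apply, Complex.mul_conj, Complex.normSq_eq_norm_sq,
    -Complex.ofReal_pow]

lemma inner_flattenReIm_one_one :
    ⟪flattenReIm (1 : Matrix n n ℂ), flattenReIm 1⟫_ℝ = Fintype.card n := by
  rw [inner_flattenReIm isHermitian_one isHermitian_one]
  simp [one_apply]

end FlattenReIm

theorem exists_one_div_sqrt_card_le_norm_inner {κ n : Type*} [Fintype κ] [Fintype n]
    [DecidableEq n] [Nonempty n] (hcard : Fintype.card n ^ 2 < Fintype.card κ)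
    (φ : κ → EuclideanSpace ℂ n) (hφ : ∀ j, ‖φ j‖ = 1) :
    ∃ j l, j ≠ l ∧ 1 / √(Fintype.card n) ≤ ‖⟪φ j, φ l⟫_ℂ‖ := by
  by_contra! hsmall
  set m : ℝ := (Fintype.card n : ℝ)
  have hm : 0 < m := by positivity
  set u : EuclideanSpace ℝ (n × n) := flattenReIm 1
  set T : κ → EuclideanSpace ℝ (n × n) :=
    fun j => flattenReIm (vecMulVec (φ j) (star (φ j))) - m⁻¹ • u
  have hu : ⟪u, u⟫_ℝ = m := inner_flattenReIm_one_one
  have huT : ∀ j, ⟪u, T j⟫_ℝ = 0 := fun j => by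
    rw [inner_sub_right, real_inner_smul_right, inner_flattenReIm_one_vecMulVec, hφ, hu]
    field_simp
    ring
  have hTT : ∀ j l, ⟪T j, T l⟫_ℝ = ‖⟪φ j, φ l⟫_ℂ‖ ^ 2 - m⁻¹ := fun j l => by
    rw [inner_sub_left, inner_sub_right, inner_sub_right, real_inner_smul_left,
      real_inner_smul_left, real_inner_smul_right, real_inner_smul_right,
      inner_flattenReIm_vecMulVec, real_inner_comm, inner_flattenReIm_one_vecMulVec,
      inner_flattenReIm_one_vecMulVec, hφ, hφ, hu]
    field_simp
    ring
  have hobtuse : Pairwise fun j l => ⟪T j, T l⟫_ℝ < 0 := fun j l hjl => by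
    show ⟪T j, T l⟫_ℝ < 0
    rw [hTT, sub_neg, ← one_div, ← Real.sq_sqrt hm.le, ← _root_.one_div_pow]
    exact pow_lt_pow_left₀ (hsmall j l hjl) (norm_nonneg _) two_ne_zero
  have hu₀ : u ≠ 0 := fun h => by simp [h, hm.ne] at hu
  have hle := card_le_finrank_of_pairwise_inner_neg hobtuse hu₀ huT
  rw [finrank_euclideanSpace, Fintype.card_prod, ← sq] at hle
  omega

lemma norm_inner_le_coherence {M N : ℕ} (φ : Fin N → EuclideanSpace ℂ (Fin M)) {j l : Fin N}
    (hjl : j ≠ l) : ‖⟪φ j, φ l⟫_ℂ‖ ≤ coherence φ :=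
  le_ciSup (f := fun p : {p : Fin N × Fin N // p.1 ≠ p.2} => ‖⟪φ p.1.1, φ p.1.2⟫_ℂ‖)
    (Set.finite_range _).bddAbove ⟨(j, l), hjl⟩

theorem orthoplex_bound_complex {M N : ℕ} (hN : M ^ 2 < N)
    (φ : Fin N → EuclideanSpace ℂ (Fin M))
    (hunit : ∀ j, ‖φ j‖ = 1) :
    (∃ j l, j ≠ l ∧ 1 / Real.sqrt M ≤ ‖(inner ℂ (φ j) (φ l) : ℂ)‖) ∧
      1 / Real.sqrt M ≤ grassmannianConst N M := by
  have hM : 0 < M := by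
    rcases Nat.eq_zero_or_pos M with rfl | hM
    · simpa [Subsingleton.elim (φ ⟨0, hN⟩) 0] using hunit ⟨0, hN⟩
    · exact hM
  have : Nonempty (Fin M) := ⟨⟨0, hM⟩⟩
  have key (ψ : Fin N → EuclideanSpace ℂ (Fin M)) (hψ : ∀ j, ‖ψ j‖ = 1) :
      ∃ j l, j ≠ l ∧ 1 / √M ≤ ‖⟪ψ j, ψ l⟫_ℂ‖ := by
    simpa using exists_one_div_sqrt_card_le_norm_inner (by simpa using hN) ψ hψ
  have : Nonempty {ψ : Fin N → EuclideanSpace ℂ (Fin M) // ∀ j, ‖ψ j‖ = 1} :=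
    ⟨⟨fun _ => EuclideanSpace.single ⟨0, hM⟩ 1, by simp⟩⟩
  refine ⟨key φ hunit, le_ciInf fun ψ => ?_⟩
  obtain ⟨j, l, hjl, hle⟩ := key ψ.1 ψ.2
  exact hle.trans (norm_inner_le_coherence _ hjl)
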